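/- For n, k ≥ 0, a gamble h on N^n, and m' ∈ N^{n+k}: writing f = h ∘ T^n and f̃ for its cylindrical extension to X^{n+k}, one has MuHy^{n+k}(f̃|m') = Σ_{m ∈ N^n} (ν(m'−m)·ν(m)/ν(m')) · h(m), where ν(m'−m) is taken to be 0 unless m ≤ m' componentwise. -/

import Mathlib

/-- The counting map: `countVec z x` is the number of indices `k` with `z k = x`. -/
def countVec {X : Type*} [DecidableEq X] {n : ℕ} (z : Fin n → X) : X → ℕ :=
  fun x => (Finset.univ.filter fun k => z k = x).card

/-- The multinomial coefficient `ν(m) = (Σ_x m_x)! / ∏_x m_x!`. -/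
def nu {X : Type*} [Fintype X] (m : X → ℕ) : ℕ :=
  (∑ x, m x).factorial / ∏ x, (m x).factorial

/-- The set of count vectors `N^n = {m ∈ ℕ^X : Σ_x m_x = n}`, as a finset. -/
def NN (X : Type*) [Fintype X] [DecidableEq X] (n : ℕ) : Finset (X → ℕ) :=
  (Fintype.piFinset fun _ : X => Finset.range (n + 1)).filter fun m => ∑ x, m x = n

/-- `MuHy^n(f|m)`: the uniform average of `f` over the invariant atom `[m]`, with
`ν(m) = |[m]|` elements. -/
noncomputable def MuHy {X : Type*} [Fintype X] [DecidableEq X] {n : ℕ}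
    (f : (Fin n → X) → ℝ) (m : X → ℕ) : ℝ :=
  (∑ z ∈ Finset.univ.filter fun z : Fin n → X => countVec z = m, f z) / nu m


/-! Splitting a word of `X^(n+k)` as a prefix `a ∈ X^n` followed by a suffix `b ∈ X^k` makes
counts add, `T(a ++ b) = T(a) + T(b)`. So the words of type `m'` whose prefix has type `m` are
the pairs with `T(a) = m` and `T(b) = m' - m`; there are `ν(m) ν(m' - m)` of them when
`m ≤ m'` and none otherwise, because an atom `[m]` has exactly `ν(m)` elements. That count is
proved by induction on the length of the words, peeling off the first letter. -/

open Finset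

section CountVec

variable {X : Type*} [DecidableEq X]

theorem countVec_eq_sum_single {n : ℕ} (z : Fin n → X) :
    countVec z = ∑ i, Pi.single (z i) 1 := by
  ext x
  simp only [countVec, Finset.sum_apply, Pi.single_apply, Finset.sum_boole, eq_comm, Nat.cast_id]

theorem countVec_cons {n : ℕ} (x : X) (w : Fin n → X) :
    countVec (Fin.cons x w : Fin (n + 1) → X) = Pi.single x 1 + countVec w := by
  simp only [countVec_eq_sum_single, Fin.sum_univ_succ, Fin.cons_zero, Fin.cons_succ]

theorem countVec_append {n k : ℕ} (a : Fin n → X) (b : Fin k → X) :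
    countVec (Fin.append a b) = countVec a + countVec b := by
  simp only [countVec_eq_sum_single, Fin.sum_univ_add, Fin.append_left, Fin.append_right]

variable [Fintype X]

theorem sum_countVec {n : ℕ} (z : Fin n → X) : ∑ x, countVec z x = n := by
  simp [countVec_eq_sum_single, Finset.sum_apply, Finset.sum_comm (γ := X)]

theorem mem_NN {n : ℕ} {m : X → ℕ} : m ∈ NN X n ↔ ∑ x, m x = n := by
  refine ⟨fun hm => (mem_filter.mp hm).2, fun hm => mem_filter.mpr ⟨?_, hm⟩⟩
  simp only [Fintype.mem_piFinset, mem_range, Nat.lt_succ_iff]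
  exact fun x => hm ▸ single_le_sum (fun y _ => Nat.zero_le (m y)) (mem_univ x)

theorem countVec_mem_NN {n : ℕ} (z : Fin n → X) : countVec z ∈ NN X n :=
  mem_NN.mpr (sum_countVec z)

theorem sum_filter_countVec_append {R : Type*} [AddCommMonoid R] {n k : ℕ} (m' : X → ℕ)
    (g : (Fin (n + k) → X) → R) :
    ∑ z with countVec z = m', g z
      = ∑ a : Fin n → X, ∑ b with countVec a + countVec b = m', g (Fin.append a b) := by
  rw [sum_filter, ← (Fin.appendEquiv n k).sum_comp, Fintype.sum_prod_type]
  simp only [sum_filter, ← countVec_append]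
  rfl

theorem card_filter_countVec_succ {n : ℕ} (m : X → ℕ) :
    #{z : Fin (n + 1) → X | countVec z = m}
      = ∑ x, #{w : Fin n → X | Pi.single x 1 + countVec w = m} := by
  simp only [card_filter]
  rw [← (Fin.consEquiv fun _ => X).sum_comp, Fintype.sum_prod_type]
  simp only [← countVec_cons]
  rfl

theorem card_filter_add_countVec_eq {k : ℕ} (c m : X → ℕ) :
    #{b : Fin k → X | c + countVec b = m}
      = if ∀ x, c x ≤ m x then #{b : Fin k → X | countVec b = m - c} else 0 := by
  split_ifs with hc
  · congr 1
    refine filter_congr fun b _ => ⟨fun h => ?_, fun h => ?_⟩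
    · rw [← h, add_tsub_cancel_left]
    · rw [h, add_tsub_cancel_of_le hc]
  · refine card_eq_zero.mpr (filter_eq_empty_iff.mpr fun b _ h => hc fun x => ?_)
    rw [← h]
    exact Nat.le_add_right _ _

end CountVec

section Multinomial

open Nat

variable {X : Type*} [Fintype X] [DecidableEq X]

theorem prod_factorial_eq_mul_prod_factorial_tsub_single {m : X → ℕ} {x : X} (hx : 1 ≤ m x) :
    ∏ y, (m y)! = m x * ∏ y, ((m - Pi.single x 1 : X → ℕ) y)! := by
  rw [Fintype.prod_eq_mul_prod_compl x, Fintype.prod_eq_mul_prod_compl x, ← mul_assoc]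
  congr 1
  · simp [Nat.mul_factorial_pred (Nat.one_le_iff_ne_zero.mp hx)]
  · exact prod_congr rfl fun y hy => by
      simp [Pi.single_eq_of_ne (mem_compl.mp hy ∘ mem_singleton.mpr)]

theorem card_filter_countVec_mul_prod_factorial {n : ℕ} {m : X → ℕ} (hm : ∑ x, m x = n) :
    #{z : Fin n → X | countVec z = m} * ∏ x, (m x)! = n ! := by
  induction n generalizing m with
  | zero =>
    obtain rfl : m = 0 := funext fun x => sum_eq_zero_iff.mp hm x (mem_univ x)
    simp [countVec_eq_sum_single]
  | succ n ih =>
    calc #{z : Fin (n + 1) → X | countVec z = m} * ∏ x, (m x)!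
        = ∑ x, m x * n ! := by
          rw [card_filter_countVec_succ, sum_mul]
          refine sum_congr rfl fun x _ => ?_
          rw [card_filter_add_countVec_eq]
          split_ifs with hx
          · have hx1 : 1 ≤ m x := by simpa using hx x
            have hsum : ∑ y, (m - Pi.single x 1 : X → ℕ) y = n := by
              rw [sum_congr rfl fun y _ => Pi.sub_apply m (Pi.single x 1) y,
                sum_tsub_distrib _ fun y _ => hx y, hm, sum_pi_single']
              simp
            rw [prod_factorial_eq_mul_prod_factorial_tsub_single hx1, mul_left_comm, ih hsum]
          · have hx0 : m x = 0 := by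
              by_contra hx0
              refine hx fun y => ?_
              rcases eq_or_ne y x with rfl | hyx
              · simpa using Nat.one_le_iff_ne_zero.mpr hx0
              · simp [Pi.single_eq_of_ne hyx]
            rw [hx0, zero_mul, zero_mul]
      _ = (n + 1)! := by rw [← sum_mul, hm, factorial_succ]

theorem card_filter_countVec_eq_nu {n : ℕ} {m : X → ℕ} (hm : ∑ x, m x = n) :
    #{z : Fin n → X | countVec z = m} = nu m := by
  have hpos : 0 < ∏ x, (m x)! := prod_pos fun x _ => factorial_pos (m x)
  rw [nu, hm, ← card_filter_countVec_mul_prod_factorial hm, Nat.mul_div_cancel _ hpos]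

theorem sum_comp_countVec {R : Type*} [AddCommMonoid R] (n : ℕ) (F : (X → ℕ) → R) :
    ∑ z : Fin n → X, F (countVec z) = ∑ m ∈ NN X n, nu m • F m := by
  rw [← sum_fiberwise_of_maps_to (t := NN X n) fun z _ => countVec_mem_NN z]
  refine sum_congr rfl fun m hm => ?_
  rw [sum_congr rfl fun z hz => congrArg F (mem_filter.mp hz).2, sum_const,
    card_filter_countVec_eq_nu (mem_NN.mp hm)]

end Multinomial

theorem muHy_cylindrical_extension_general
    {X : Type*} [Fintype X] [DecidableEq X] (n k : ℕ)
    (h : (X → ℕ) → ℝ) (m' : X → ℕ) (hm' : ∑ x, m' x = n + k) :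
    MuHy (fun z : Fin (n + k) → X =>
        h (countVec fun i : Fin n => z (Fin.castAdd k i))) m'
      = ∑ m ∈ NN X n,
          ((if ∀ x, m x ≤ m' x then (nu (m' - m) : ℝ) else 0) * nu m / nu m') * h m := by
  let F : (X → ℕ) → ℝ := fun m => (if ∀ x, m x ≤ m' x then (nu (m' - m) : ℝ) else 0) * h m
  have hfiber (a : Fin n → X) :
      ∑ b with countVec a + countVec b = m', h (countVec fun i => Fin.append a b (Fin.castAdd k i))
        = F (countVec a) := by
    simp only [Fin.append_left, sum_const, nsmul_eq_mul, card_filter_add_countVec_eq, F]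
    split_ifs with ha
    · have hsum : ∑ x, (m' - countVec a : X → ℕ) x = k := by
        rw [sum_congr rfl fun x _ => Pi.sub_apply m' (countVec a) x,
          sum_tsub_distrib _ fun x _ => ha x, hm', sum_countVec, Nat.add_sub_cancel_left]
      rw [card_filter_countVec_eq_nu hsum]
    · rw [Nat.cast_zero]
  rw [MuHy, sum_filter_countVec_append, sum_congr rfl fun a _ => hfiber a, sum_comp_countVec,
    sum_div]
  refine sum_congr rfl fun m _ => ?_
  simp only [F, nsmul_eq_mul]
  ring

/-- For a gamble `h` on `N^n` and a count vector `m' ∈ N^{n+k}`, writing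
`f = h ∘ T^n` and `f̃` for its cylindrical extension to `X^{n+k}`,
`MuHy^{n+k}(f̃|m') = Σ_{m ∈ N^n} (ν(m'−m)·ν(m)/ν(m'))·h(m)`, with `ν(m'−m) = 0` unless
`m ≤ m'` componentwise. -/
theorem muHy_cylindrical_extension
    {X : Type*} [Fintype X] [DecidableEq X] [Nonempty X] (n k : ℕ)
    (h : (X → ℕ) → ℝ) (m' : X → ℕ) (hm' : ∑ x, m' x = n + k) :
    MuHy (fun z : Fin (n + k) → X =>
        h (countVec fun i : Fin n => z (Fin.castAdd k i))) m'
      = ∑ m ∈ NN X n,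
          ((if ∀ x, m x ≤ m' x then (nu (m' - m) : ℝ) else 0) * nu m / nu m') * h m :=
  muHy_cylindrical_extension_general n k h m' hm'
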